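/- Directional (Gâteaux) derivative of J. Let D ⊂ ℝ^d be an open bounded set, let u, ψ ∈ L²(D) have weak gradients ∇u, ∇ψ ∈ L²(D;ℝ^d), and let v, φ ∈ L^∞(D) have weak gradients ∇v, ∇φ ∈ L²(D;ℝ^d). Then the real function t ↦ J(u + tψ, v + tφ) is differentiable at t = 0 and its derivative at 0 equals A(v;u,ψ) + B(u;v,φ), where A(v;u,ψ) = ∫_D ((1−κ)v²+κ)(1+β^α|T(v,∇u)|^{2α})^{−(1/α+1)} ∇u·∇ψ dx and B(u;v,φ) = ∫_D [2ρ∇v·∇φ − δφ + (1−κ)|∇u|²(1+β^α|T(v,∇u)|^{2α})^{−(1/α+1)} v φ] dx. -/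

import Mathlib

open MeasureTheory Filter
open scoped Topology ENNReal

noncomputable section

abbrev Euc (d : ℕ) : Type := EuclideanSpace ℝ (Fin d)

/-- `u ∈ L²(D)` together with a weak gradient `U ∈ L²(D; ℝ^d)`. -/
def HasWeakGradOn {d : ℕ} (D : Set (Euc d)) (u : Euc d → ℝ) (U : Euc d → Euc d) : Prop :=
  MemLp u 2 (volume.restrict D) ∧ MemLp U 2 (volume.restrict D) ∧
    ∀ φ : Euc d → ℝ, ContDiff ℝ (⊤ : ℕ∞) φ → HasCompactSupport φ → tsupport φ ⊆ D →
      ∀ j : Fin d,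
        ∫ x in D, u x * fderiv ℝ φ x (EuclideanSpace.single j 1) =
          - ∫ x in D, φ x * U x j

/-- The denominator `(1 + β^α |T(s,g)|^{2α})^{1/α + 1}` with `|T(s,g)|² = ((1-κ)s²+κ)|g|²`. -/
def denomD {d : ℕ} (α β κ : ℝ) (s : ℝ) (g : Euc d) : ℝ :=
  (1 + β ^ α * (((1 - κ) * s ^ 2 + κ) * ‖g‖ ^ 2) ^ α) ^ (1 / α + 1)

/-- The elastic form `A(v; u, ψ)`, expressed through the weak gradients `gu = ∇u`, `gψ = ∇ψ`. -/
def formA {d : ℕ} (α β κ : ℝ) (D : Set (Euc d)) (v : Euc d → ℝ)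
    (gu gψ : Euc d → Euc d) : ℝ :=
  ∫ x in D, (((1 - κ) * v x ^ 2 + κ) / denomD α β κ (v x) (gu x)) * (inner ℝ (gu x) (gψ x) : ℝ)

/-- The phase-field form `B(u; v, φ)`, via the weak gradients `gu = ∇u`, `gv = ∇v`, `gφ = ∇φ`. -/
def formB {d : ℕ} (α β κ ρ δ : ℝ) (D : Set (Euc d)) (v φ : Euc d → ℝ)
    (gu gv gφ : Euc d → Euc d) : ℝ :=
  ∫ x in D, (2 * ρ * (inner ℝ (gv x) (gφ x) : ℝ) - δ * φ x
    + ((1 - κ) * ‖gu x‖ ^ 2 / denomD α β κ (v x) (gu x)) * v x * φ x)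

/-- The regularized total energy `J(u, v)`, via the weak gradients `gu = ∇u`, `gv = ∇v`. -/
def energyJ {d : ℕ} (α β κ ρ δ : ℝ) (D : Set (Euc d)) (v : Euc d → ℝ)
    (gu gv : Euc d → Euc d) : ℝ :=
  ∫ x in D, ((((1 - κ) * v x ^ 2 + κ) * ‖gu x‖ ^ 2) /
      (2 * (1 + β ^ α * (((1 - κ) * v x ^ 2 + κ) * ‖gu x‖ ^ 2) ^ α) ^ (1 / α))
    + ρ * ‖gv x‖ ^ 2 + δ * (1 - v x))

/-!
Along the line `t ↦ (v + tφ, ∇u + t∇ψ, ∇v + t∇φ)` the integrand of `J` is differentiable at every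
point. Its only delicate factor is `w ↦ w / (2 (1 + β^α w^α)^{1/α})` evaluated at
`w = c(v) |∇u|²`: for `w > 0` it is differentiable with derivative
`1 / (2 (1 + β^α w^α)^{1/α + 1})`, and where `w(t)` vanishes it has a minimum (so `w' = 0`)
while the factor is `O(w)`, so the chain rule still holds. All denominators are at least `1` and `v, φ` are essentially
bounded, so for `|t| < 1` the `t`-derivative is dominated by
`C (|∇u| + |∇ψ| + |∇v| + |∇φ|)² + C'`, integrable on the bounded set `D`; differentiation under
the integral sign gives the formula.
-/

open Asymptotics

/-- The degradation function `c(s)` of the statement. -/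
def degradation (κ s : ℝ) : ℝ := (1 - κ) * s ^ 2 + κ

def energyProfile (α β w : ℝ) : ℝ := w / (2 * (1 + β ^ α * w ^ α) ^ (1 / α))

def profileDenom (α β w : ℝ) : ℝ := (1 + β ^ α * w ^ α) ^ (1 / α + 1)

@[fun_prop]
lemma measurable_degradation (κ : ℝ) : Measurable (degradation κ) := by
  unfold degradation; fun_prop

@[fun_prop]
lemma measurable_energyProfile (α β : ℝ) : Measurable (energyProfile α β) := by
  unfold energyProfile; fun_prop

@[fun_prop]
lemma measurable_profileDenom (α β : ℝ) : Measurable (profileDenom α β) := by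
  unfold profileDenom; fun_prop

section Degradation

variable {κ : ℝ}

lemma degradation_nonneg (hκ : κ ∈ Set.Icc (0 : ℝ) 1) (s : ℝ) : 0 ≤ degradation κ s := by
  unfold degradation; nlinarith [hκ.1, hκ.2, sq_nonneg s]

lemma degradation_le_of_abs_le (hκ : κ ≤ 1) {s M : ℝ} (hs : |s| ≤ M) :
    degradation κ s ≤ degradation κ M := by
  have : s ^ 2 ≤ M ^ 2 := by simpa only [sq_abs] using pow_le_pow_left₀ (abs_nonneg s) hs 2
  unfold degradation; nlinarith

end Degradation

section Profile

variable {α β w : ℝ}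

lemma one_le_one_add_rpow_mul_rpow (hβ : 0 ≤ β) (hw : 0 ≤ w) : 1 ≤ 1 + β ^ α * w ^ α :=
  le_add_of_nonneg_right (by positivity)

lemma one_le_profileDenom (hα : 0 < α) (hβ : 0 ≤ β) (hw : 0 ≤ w) : 1 ≤ profileDenom α β w :=
  Real.one_le_rpow (one_le_one_add_rpow_mul_rpow hβ hw) (by positivity)

lemma abs_energyProfile_le (hα : 0 < α) (hβ : 0 ≤ β) (hw : 0 ≤ w) :
    |energyProfile α β w| ≤ w := by
  have hden : 1 ≤ 2 * (1 + β ^ α * w ^ α) ^ (1 / α) := by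
    linarith [Real.one_le_rpow (one_le_one_add_rpow_mul_rpow (α := α) hβ hw)
      (by positivity : 0 ≤ 1 / α)]
  rw [energyProfile, abs_of_nonneg (div_nonneg hw (by linarith))]
  exact div_le_self hw hden

lemma hasDerivAt_energyProfile (hα : 0 < α) (hβ : 0 ≤ β) (hw : 0 < w) :
    HasDerivAt (energyProfile α β) (1 / (2 * profileDenom α β w)) w := by
  have hB : 0 < 1 + β ^ α * w ^ α := by linarith [one_le_one_add_rpow_mul_rpow (α := α) hβ hw.le]
  have hbase : HasDerivAt (fun W : ℝ => 1 + β ^ α * W ^ α) (β ^ α * (α * w ^ (α - 1))) w :=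
    ((Real.hasDerivAt_rpow_const (Or.inl hw.ne')).const_mul _).const_add 1
  have hquot := (hasDerivAt_id' w).div
    ((hbase.rpow_const (p := 1 / α) (Or.inl hB.ne')).const_mul 2) (by positivity)
  refine hquot.congr_deriv ?_
  rw [profileDenom, Real.rpow_sub_one hB.ne', Real.rpow_add_one hB.ne', Real.rpow_sub_one hw.ne']
  have : 0 < (1 + β ^ α * w ^ α) ^ (1 / α) := by positivity
  field_simp
  ring

theorem hasDerivAt_energyProfile_comp {f : ℝ → ℝ} {f' t : ℝ} (hα : 0 < α) (hβ : 0 ≤ β)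
    (hf0 : ∀ t, 0 ≤ f t) (hf : HasDerivAt f f' t) :
    HasDerivAt (fun t => energyProfile α β (f t)) (f' / (2 * profileDenom α β (f t))) t := by
  rcases (hf0 t).eq_or_lt with hzero | hpos
  · have hf' : f' = 0 :=
      IsLocalMin.hasDerivAt_eq_zero (Eventually.of_forall fun t' => hzero ▸ hf0 t') hf
    subst hf'
    have hfo : (fun t' => f t') =o[𝓝 t] fun t' => t' - t := by
      simpa [← hzero] using hf.isLittleO
    have hprof : (fun t' => energyProfile α β (f t')) =O[𝓝 t] fun t' => f t' :=
      IsBigO.of_bound 1 (Eventually.of_forall fun t' => by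
        simpa [Real.norm_eq_abs, abs_of_nonneg (hf0 t')] using abs_energyProfile_le hα hβ (hf0 t'))
    rw [zero_div, hasDerivAt_iff_isLittleO]
    simpa [← hzero, energyProfile] using hprof.trans_isLittleO hfo
  · exact ((hasDerivAt_energyProfile hα hβ hpos).comp t hf).congr_deriv (by ring)

end Profile

section Density

variable {E : Type*} [NormedAddCommGroup E] {α β κ ρ δ s σ M G : ℝ} {g k h m : E}

def energyDensity (α β κ ρ δ s : ℝ) (g h : E) : ℝ :=
  energyProfile α β (degradation κ s * ‖g‖ ^ 2) + ρ * ‖h‖ ^ 2 + δ * (1 - s)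

lemma abs_energyDensity_le (hα : 0 < α) (hβ : 0 ≤ β) (hκ : κ ∈ Set.Icc (0 : ℝ) 1)
    (hs : |s| ≤ M) (hg : ‖g‖ ≤ G) (hh : ‖h‖ ≤ G) :
    |energyDensity α β κ ρ δ s g h| ≤ (degradation κ M + |ρ|) * G ^ 2 + |δ| * (1 + M) := by
  have hc := degradation_nonneg hκ s
  have hprof : |energyProfile α β (degradation κ s * ‖g‖ ^ 2)| ≤ degradation κ M * G ^ 2 :=
    (abs_energyProfile_le hα hβ (by positivity)).trans
      (mul_le_mul (degradation_le_of_abs_le hκ.2 hs) (by gcongr) (by positivity)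
        (hc.trans (degradation_le_of_abs_le hκ.2 hs)))
  have hgrad : |ρ * ‖h‖ ^ 2| ≤ |ρ| * G ^ 2 := by
    rw [abs_mul, abs_of_nonneg (sq_nonneg ‖h‖)]; gcongr
  have hlin : |δ * (1 - s)| ≤ |δ| * (1 + M) := by
    rw [abs_mul]; gcongr; exact (abs_sub _ _).trans (by rw [abs_one]; gcongr)
  calc |energyDensity α β κ ρ δ s g h|
      ≤ |energyProfile α β (degradation κ s * ‖g‖ ^ 2)| + |ρ * ‖h‖ ^ 2| + |δ * (1 - s)| :=
        abs_add_three _ _ _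
    _ ≤ (degradation κ M + |ρ|) * G ^ 2 + |δ| * (1 + M) := by linarith

variable [InnerProductSpace ℝ E]

/-- The integrands of `formA` and `formB`, for the direction `(σ, k, m)` at `(s, g, h)`. -/
def elasticRate (α β κ s : ℝ) (g k : E) : ℝ :=
  degradation κ s / profileDenom α β (degradation κ s * ‖g‖ ^ 2) * inner ℝ g k

def phaseRate (α β κ ρ δ s σ : ℝ) (g h m : E) : ℝ :=
  2 * ρ * inner ℝ h m - δ * σ
    + (1 - κ) * ‖g‖ ^ 2 / profileDenom α β (degradation κ s * ‖g‖ ^ 2) * s * σ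

theorem hasDerivAt_energyDensity_line (hα : 0 < α) (hβ : 0 ≤ β) (hκ : κ ∈ Set.Icc (0 : ℝ) 1)
    (s σ : ℝ) (g k h m : E) (t : ℝ) :
    HasDerivAt (fun t => energyDensity α β κ ρ δ (s + t * σ) (g + t • k) (h + t • m))
      (elasticRate α β κ (s + t * σ) (g + t • k) k
        + phaseRate α β κ ρ δ (s + t * σ) σ (g + t • k) (h + t • m) m) t := by
  have hs : HasDerivAt (fun t => s + t * σ) σ t := by
    simpa using ((hasDerivAt_id t).mul_const σ).const_add s
  have hg : HasDerivAt (fun t : ℝ => g + t • k) k t := by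
    simpa using ((hasDerivAt_id t).smul_const k).const_add g
  have hh : HasDerivAt (fun t : ℝ => h + t • m) m t := by
    simpa using ((hasDerivAt_id t).smul_const m).const_add h
  have hc : HasDerivAt (fun t => degradation κ (s + t * σ)) ((1 - κ) * (2 * (s + t * σ) * σ)) t :=
    ((hs.pow 2).const_mul (1 - κ)).add_const κ |>.congr_deriv (by ring)
  have hw := hasDerivAt_energyProfile_comp hα hβ
    (fun t => mul_nonneg (degradation_nonneg hκ (s + t * σ)) (sq_nonneg ‖g + t • k‖))
    (hc.mul hg.norm_sq)
  have hD : 0 < profileDenom α β (degradation κ (s + t * σ) * ‖g + t • k‖ ^ 2) :=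
    one_pos.trans_le (one_le_profileDenom hα hβ
      (mul_nonneg (degradation_nonneg hκ _) (sq_nonneg _)))
  refine ((hw.add (hh.norm_sq.const_mul ρ)).add ((hs.const_sub 1).const_mul δ)).congr_deriv ?_
  unfold elasticRate phaseRate
  field_simp
  ring

lemma abs_elasticRate_le (hα : 0 < α) (hβ : 0 ≤ β) (hκ : κ ∈ Set.Icc (0 : ℝ) 1)
    (hs : |s| ≤ M) (hg : ‖g‖ ≤ G) (hk : ‖k‖ ≤ G) :
    |elasticRate α β κ s g k| ≤ degradation κ M * G ^ 2 := by
  have hc := degradation_nonneg hκ s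
  have hD := one_le_profileDenom hα hβ (mul_nonneg hc (sq_nonneg ‖g‖))
  have hcM := degradation_le_of_abs_le hκ.2 hs
  rw [elasticRate, abs_mul, abs_of_nonneg (div_nonneg hc (zero_le_one.trans hD))]
  refine (mul_le_mul ((div_le_self hc hD).trans hcM) ((abs_real_inner_le_norm g k).trans
    (mul_le_mul hg hk (norm_nonneg k) ((norm_nonneg g).trans hg))) (abs_nonneg _)
    (hc.trans hcM)).trans_eq (by ring)

lemma abs_phaseRate_le (hα : 0 < α) (hβ : 0 ≤ β) (hκ : κ ∈ Set.Icc (0 : ℝ) 1)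
    (hs : |s| ≤ M) (hσ : |σ| ≤ M) (hg : ‖g‖ ≤ G) (hh : ‖h‖ ≤ G) (hm : ‖m‖ ≤ G) :
    |phaseRate α β κ ρ δ s σ g h m| ≤ (2 * |ρ| + (1 - κ) * M ^ 2) * G ^ 2 + |δ| * M := by
  have hc := degradation_nonneg hκ s
  have hD := one_le_profileDenom hα hβ (mul_nonneg hc (sq_nonneg ‖g‖))
  have hκ1 : 0 ≤ 1 - κ := sub_nonneg.2 hκ.2
  have hgrad : |2 * ρ * inner ℝ h m| ≤ 2 * |ρ| * G ^ 2 := by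
    rw [abs_mul, abs_mul, abs_two]
    refine (mul_le_mul_of_nonneg_left ((abs_real_inner_le_norm h m).trans
      (mul_le_mul hh hm (norm_nonneg m) ((norm_nonneg h).trans hh))) (by positivity)).trans_eq
      (by ring)
  have hlin : |δ * σ| ≤ |δ| * M := by rw [abs_mul]; gcongr
  have hcoupling : |(1 - κ) * ‖g‖ ^ 2 / profileDenom α β (degradation κ s * ‖g‖ ^ 2) * s * σ|
      ≤ (1 - κ) * M ^ 2 * G ^ 2 := by
    rw [abs_mul, abs_mul, abs_of_nonneg (div_nonneg (by positivity) (zero_le_one.trans hD))]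
    have hq : (1 - κ) * ‖g‖ ^ 2 / profileDenom α β (degradation κ s * ‖g‖ ^ 2)
        ≤ (1 - κ) * G ^ 2 :=
      (div_le_self (by positivity) hD).trans (by gcongr)
    have hM : 0 ≤ M := (abs_nonneg s).trans hs
    exact (mul_le_mul (mul_le_mul hq hs (abs_nonneg _) (by positivity)) hσ (abs_nonneg _)
      (by positivity)).trans_eq (by ring)
  calc |phaseRate α β κ ρ δ s σ g h m|
      ≤ |2 * ρ * inner ℝ h m| + |δ * σ|
        + |(1 - κ) * ‖g‖ ^ 2 / profileDenom α β (degradation κ s * ‖g‖ ^ 2) * s * σ| :=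
        (abs_add_le _ _).trans (add_le_add_left (abs_sub _ _) _)
    _ ≤ (2 * |ρ| + (1 - κ) * M ^ 2) * G ^ 2 + |δ| * M := by linarith

lemma abs_elasticRate_add_phaseRate_le (hα : 0 < α) (hβ : 0 ≤ β)
    (hκ : κ ∈ Set.Icc (0 : ℝ) 1) (hs : |s| ≤ M) (hσ : |σ| ≤ M) (hg : ‖g‖ ≤ G) (hk : ‖k‖ ≤ G)
    (hh : ‖h‖ ≤ G) (hm : ‖m‖ ≤ G) :
    |elasticRate α β κ s g k + phaseRate α β κ ρ δ s σ g h m|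
      ≤ (degradation κ M + 2 * |ρ| + (1 - κ) * M ^ 2) * G ^ 2 + |δ| * M := by
  have := abs_elasticRate_le hα hβ hκ hs hg hk
  have := abs_phaseRate_le (ρ := ρ) (δ := δ) hα hβ hκ hs hσ hg hh hm
  linarith [abs_add_le (elasticRate α β κ s g k) (phaseRate α β κ ρ δ s σ g h m)]

end Density

lemma norm_add_smul_le_of_abs_le_one {F : Type*} [SeminormedAddCommGroup F] [NormedSpace ℝ F]
    {t : ℝ} (ht : |t| ≤ 1) (a b : F) : ‖a + t • b‖ ≤ ‖a‖ + ‖b‖ :=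
  (norm_add_le _ _).trans (by
    gcongr; exact (norm_smul t b).trans_le (mul_le_of_le_one_left (norm_nonneg b) ht))

lemma exists_ae_abs_add_mul_le {X : Type*} [MeasurableSpace X] {μ : Measure X} {s σ : X → ℝ}
    (hs : MemLp s ⊤ μ) (hσ : MemLp σ ⊤ μ) :
    ∃ M, ∀ᵐ x ∂μ, ∀ t : ℝ, |t| ≤ 1 → |s x + t * σ x| ≤ M ∧ |σ x| ≤ M := by
  refine ⟨lpNorm s ⊤ μ + lpNorm σ ⊤ μ, ?_⟩
  filter_upwards [ae_le_lpNorm_exponent_top hs, ae_le_lpNorm_exponent_top hσ] with x hsx hσx t ht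
  exact ⟨(norm_add_smul_le_of_abs_le_one ht (s x) (σ x)).trans (add_le_add hsx hσx),
    hσx.trans (le_add_of_nonneg_left lpNorm_nonneg)⟩

lemma integrable_of_abs_le_mul_sq_add_const {X : Type*} [MeasurableSpace X] {μ : Measure X}
    [IsFiniteMeasure μ] {f G : X → ℝ} (hf : AEStronglyMeasurable f μ) (hG : MemLp G 2 μ)
    {a b : ℝ} (hfG : ∀ᵐ x ∂μ, |f x| ≤ a * G x ^ 2 + b) : Integrable f μ :=
  ((hG.integrable_sq.const_mul a).add (integrable_const b)).mono' hf hfG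

section Integral

variable {E : Type*} [NormedAddCommGroup E] {α β κ ρ δ : ℝ}
  {X : Type*} [MeasurableSpace X] {μ : Measure X} {s σ : X → ℝ} {g k h m : X → E}

lemma aemeasurable_energyDensity (hs : AEMeasurable s μ) (hg : AEStronglyMeasurable g μ)
    (hh : AEStronglyMeasurable h μ) :
    AEMeasurable (fun x => energyDensity α β κ ρ δ (s x) (g x) (h x)) μ := by
  have := hg.norm.aemeasurable
  have := hh.norm.aemeasurable
  unfold energyDensity
  fun_prop

lemma integrable_energyDensity [IsFiniteMeasure μ] (hα : 0 < α) (hβ : 0 ≤ β)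
    (hκ : κ ∈ Set.Icc (0 : ℝ) 1) (hs : MemLp s ⊤ μ) (hg : MemLp g 2 μ) (hh : MemLp h 2 μ) :
    Integrable (fun x => energyDensity α β κ ρ δ (s x) (g x) (h x)) μ :=
  integrable_of_abs_le_mul_sq_add_const
    (aemeasurable_energyDensity hs.1.aemeasurable hg.1 hh.1).aestronglyMeasurable
    (hg.norm.add hh.norm) ((ae_le_lpNorm_exponent_top hs).mono fun _ hsx =>
      abs_energyDensity_le hα hβ hκ hsx (le_add_of_nonneg_right (norm_nonneg _))
        (le_add_of_nonneg_left (norm_nonneg _)))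

variable [InnerProductSpace ℝ E]

lemma aemeasurable_elasticRate (hs : AEMeasurable s μ) (hg : AEStronglyMeasurable g μ)
    (hk : AEStronglyMeasurable k μ) :
    AEMeasurable (fun x => elasticRate α β κ (s x) (g x) (k x)) μ := by
  have := hg.norm.aemeasurable
  have := (hg.inner (𝕜 := ℝ) hk).aemeasurable
  unfold elasticRate
  fun_prop

lemma aemeasurable_phaseRate (hs : AEMeasurable s μ) (hσ : AEMeasurable σ μ)
    (hg : AEStronglyMeasurable g μ) (hh : AEStronglyMeasurable h μ)
    (hm : AEStronglyMeasurable m μ) :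
    AEMeasurable (fun x => phaseRate α β κ ρ δ (s x) (σ x) (g x) (h x) (m x)) μ := by
  have := hg.norm.aemeasurable
  have := (hh.inner (𝕜 := ℝ) hm).aemeasurable
  unfold phaseRate
  fun_prop

variable [IsFiniteMeasure μ]

lemma integrable_elasticRate (hα : 0 < α) (hβ : 0 ≤ β) (hκ : κ ∈ Set.Icc (0 : ℝ) 1)
    (hs : MemLp s ⊤ μ) (hg : MemLp g 2 μ) (hk : MemLp k 2 μ) :
    Integrable (fun x => elasticRate α β κ (s x) (g x) (k x)) μ :=
  integrable_of_abs_le_mul_sq_add_const (b := 0)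
    (aemeasurable_elasticRate hs.1.aemeasurable hg.1 hk.1).aestronglyMeasurable
    (hg.norm.add hk.norm) ((ae_le_lpNorm_exponent_top hs).mono fun _ hsx =>
      (abs_elasticRate_le hα hβ hκ hsx (le_add_of_nonneg_right (norm_nonneg _))
        (le_add_of_nonneg_left (norm_nonneg _))).trans_eq (add_zero _).symm)

lemma integrable_phaseRate (hα : 0 < α) (hβ : 0 ≤ β) (hκ : κ ∈ Set.Icc (0 : ℝ) 1)
    (hs : MemLp s ⊤ μ) (hσ : MemLp σ ⊤ μ) (hg : MemLp g 2 μ) (hh : MemLp h 2 μ)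
    (hm : MemLp m 2 μ) :
    Integrable (fun x => phaseRate α β κ ρ δ (s x) (σ x) (g x) (h x) (m x)) μ := by
  set M := lpNorm s ⊤ μ + lpNorm σ ⊤ μ
  refine integrable_of_abs_le_mul_sq_add_const (a := 2 * |ρ| + (1 - κ) * M ^ 2) (b := |δ| * M)
    (aemeasurable_phaseRate hs.1.aemeasurable hσ.1.aemeasurable hg.1 hh.1 hm.1).aestronglyMeasurable
    ((hg.norm.add hh.norm).add hm.norm) ?_
  filter_upwards [ae_le_lpNorm_exponent_top hs, ae_le_lpNorm_exponent_top hσ] with x hsx hσx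
  have := norm_nonneg (g x); have := norm_nonneg (h x); have := norm_nonneg (m x)
  exact abs_phaseRate_le hα hβ hκ (hsx.trans (le_add_of_nonneg_right lpNorm_nonneg))
    (hσx.trans (le_add_of_nonneg_left lpNorm_nonneg)) (by simp only [Pi.add_apply]; linarith)
    (by simp only [Pi.add_apply]; linarith) (by simp only [Pi.add_apply]; linarith)

theorem hasDerivAt_integral_energyDensity_line (hα : 0 < α) (hβ : 0 ≤ β)
    (hκ : κ ∈ Set.Icc (0 : ℝ) 1) (hs : MemLp s ⊤ μ) (hσ : MemLp σ ⊤ μ) (hg : MemLp g 2 μ)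
    (hk : MemLp k 2 μ) (hh : MemLp h 2 μ) (hm : MemLp m 2 μ) :
    HasDerivAt (fun t => ∫ x, energyDensity α β κ ρ δ (s x + t * σ x) (g x + t • k x)
        (h x + t • m x) ∂μ)
      ((∫ x, elasticRate α β κ (s x) (g x) (k x) ∂μ)
        + ∫ x, phaseRate α β κ ρ δ (s x) (σ x) (g x) (h x) (m x) ∂μ) 0 := by
  obtain ⟨M, hM⟩ := exists_ae_abs_add_mul_le hs hσ
  set G := fun x => ‖g x‖ + ‖k x‖ + ‖h x‖ + ‖m x‖
  have hG : MemLp G 2 μ := ((hg.norm.add hk.norm).add hh.norm).add hm.norm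
  have hrate_bound : ∀ᵐ x ∂μ, ∀ t ∈ Metric.ball (0 : ℝ) 1,
      ‖elasticRate α β κ (s x + t * σ x) (g x + t • k x) (k x)
        + phaseRate α β κ ρ δ (s x + t * σ x) (σ x) (g x + t • k x) (h x + t • m x) (m x)‖
      ≤ (degradation κ M + 2 * |ρ| + (1 - κ) * M ^ 2) * G x ^ 2 + |δ| * M := by
    filter_upwards [hM] with x hx t ht
    have ht : |t| ≤ 1 := (mem_ball_zero_iff.1 ht).le
    have hgk := norm_add_smul_le_of_abs_le_one ht (g x) (k x)
    have hhm := norm_add_smul_le_of_abs_le_one ht (h x) (m x)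
    have := norm_nonneg (g x); have := norm_nonneg (k x)
    have := norm_nonneg (h x); have := norm_nonneg (m x)
    exact abs_elasticRate_add_phaseRate_le hα hβ hκ (hx t ht).1 (hx t ht).2
      (by linarith) (by linarith) (by linarith) (by linarith)
  have helastic := integrable_elasticRate hα hβ hκ hs hg hk
  have hphase := integrable_phaseRate (ρ := ρ) (δ := δ) hα hβ hκ hs hσ hg hh hm
  have key := hasDerivAt_integral_of_dominated_loc_of_deriv_le (μ := μ) (x₀ := 0)
    (F := fun t x => energyDensity α β κ ρ δ (s x + t * σ x) (g x + t • k x) (h x + t • m x))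
    (F' := fun t x => elasticRate α β κ (s x + t * σ x) (g x + t • k x) (k x)
      + phaseRate α β κ ρ δ (s x + t * σ x) (σ x) (g x + t • k x) (h x + t • m x) (m x))
    (Metric.ball_mem_nhds 0 one_pos)
    (Eventually.of_forall fun t => (aemeasurable_energyDensity
      (hs.1.aemeasurable.add (hσ.1.aemeasurable.const_mul t))
      (hg.1.add (hk.1.const_smul t)) (hh.1.add (hm.1.const_smul t))).aestronglyMeasurable)
    (by simpa using integrable_energyDensity hα hβ hκ hs hg hh)
    (by simpa [Pi.add_def] using (helastic.add hphase).1)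
    hrate_bound ((hG.integrable_sq.const_mul _).add (integrable_const _))
    (Eventually.of_forall fun x t _ => hasDerivAt_energyDensity_line hα hβ hκ _ _ _ _ _ _ t)
  simpa only [zero_mul, add_zero, zero_smul, integral_add helastic hphase] using key.2

end Integral

theorem gateaux_derivative_of_J_general {d : ℕ}
    (D : Set (Euc d)) (hDb : Bornology.IsBounded D)
    (α β κ ρ δ : ℝ) (hα : 0 < α) (hβ : 0 ≤ β) (hκ : κ ∈ Set.Ioo (0 : ℝ) 1)
    (u ψ : Euc d → ℝ) (gu gψ : Euc d → Euc d)
    (hu : HasWeakGradOn D u gu) (hψ : HasWeakGradOn D ψ gψ)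
    (v φ : Euc d → ℝ) (gv gφ : Euc d → Euc d)
    (hv : HasWeakGradOn D v gv) (hφ : HasWeakGradOn D φ gφ)
    (hvinf : MemLp v ⊤ (volume.restrict D)) (hφinf : MemLp φ ⊤ (volume.restrict D)) :
    HasDerivAt
      (fun t : ℝ => energyJ α β κ ρ δ D (fun x => v x + t * φ x)
        (fun x => gu x + t • gψ x) (fun x => gv x + t • gφ x))
      (formA α β κ D v gu gψ + formB α β κ ρ δ D v φ gu gv gφ) 0 := by
  have : IsFiniteMeasure (volume.restrict D) := isFiniteMeasure_restrict.2 hDb.measure_lt_top.ne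
  exact hasDerivAt_integral_energyDensity_line hα hβ (Set.Ioo_subset_Icc_self hκ) hvinf hφinf
    hu.2.1 hψ.2.1 hv.2.1 hφ.2.1

/-- **Directional (Gâteaux) derivative of `J`.**
For `u, ψ ∈ H¹(D)` and `v, φ ∈ H¹(D) ∩ L^∞(D)`, the map `t ↦ J(u + tψ, v + tφ)` is
differentiable at `t = 0` with derivative `A(v;u,ψ) + B(u;v,φ)`. -/
theorem gateaux_derivative_of_J {d : ℕ} (hd : 1 ≤ d)
    (D : Set (Euc d)) (hD : IsOpen D) (hDb : Bornology.IsBounded D)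
    (α β κ ρ δ : ℝ) (hα : 0 < α) (hβ : 0 ≤ β) (hκ : κ ∈ Set.Ioo (0 : ℝ) 1)
    (hρ : 0 < ρ) (hδ : 0 < δ)
    (u ψ : Euc d → ℝ) (gu gψ : Euc d → Euc d)
    (hu : HasWeakGradOn D u gu) (hψ : HasWeakGradOn D ψ gψ)
    (v φ : Euc d → ℝ) (gv gφ : Euc d → Euc d)
    (hv : HasWeakGradOn D v gv) (hφ : HasWeakGradOn D φ gφ)
    (hvinf : MemLp v ⊤ (volume.restrict D)) (hφinf : MemLp φ ⊤ (volume.restrict D)) :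
    HasDerivAt
      (fun t : ℝ => energyJ α β κ ρ δ D (fun x => v x + t * φ x)
        (fun x => gu x + t • gψ x) (fun x => gv x + t • gφ x))
      (formA α β κ D v gu gψ + formB α β κ ρ δ D v φ gu gv gφ) 0 :=
  gateaux_derivative_of_J_general D hDb α β κ ρ δ hα hβ hκ u ψ gu gψ hu hψ v φ gv gφ hv hφ hvinf
    hφinf
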